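/- Let H be a complex Hilbert space, U a unitary operator on H, A a bounded operator on H, and K = AU − UA. Fix an s-regular summation method. Then for every α ∈ E, W₊(α)U − U W₋(α) = Σ_{n=0}^∞ p_{α,n} Σ_{l=−n}^{n} U^{l} K U^{−l}, where the series on the right converges absolutely in operator norm (each inner sum Σ_{l=−n}^{n} U^{l} K U^{−l} equals U^{−n}AU^{n+1} − U^{n+1}AU^{−n} and so has norm at most 2‖A‖). -/

import Mathlib

open MeasureTheory Filter Topology ComplexConjugate

noncomputable section

/-- An s-regular summation method indexed by a linearly ordered set `E`:
nonnegative weights `p α n` with unit sum for each `α`, total variation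
`Σₙ |p α n - p α (n+1)|` tending to `0` along `atTop`, and each weight
`p α n` tending to `0` along `atTop`. -/
structure SRegular (E : Type*) [LinearOrder E] where
  p : E → ℕ → ℝ
  nonneg : ∀ α n, 0 ≤ p α n
  hasSum_one : ∀ α, HasSum (p α) 1
  tendsto_variation : Tendsto (fun α => ∑' n, |p α n - p α (n + 1)|) atTop (𝓝 0)
  tendsto_eval : ∀ n, Tendsto (fun α => p α n) atTop (𝓝 0)

/-- The future averaged wave operator `W₊(α) = Σₙ p_{α,n} U⁻ⁿ A Uⁿ`. -/
def Wplus {E : Type*} [LinearOrder E] {H : Type*} [NormedAddCommGroup H]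
    [InnerProductSpace ℂ H] [CompleteSpace H]
    (S : SRegular E) (U : unitary (H →L[ℂ] H)) (A : H →L[ℂ] H) (α : E) : H →L[ℂ] H :=
  ∑' n : ℕ, S.p α n •
    (((U ^ (-(n : ℤ)) : unitary (H →L[ℂ] H)) : H →L[ℂ] H) ∘L A ∘L
      ((U ^ (n : ℤ) : unitary (H →L[ℂ] H)) : H →L[ℂ] H))

/-- The past averaged wave operator `W₋(α) = Σₙ p_{α,n} Uⁿ A U⁻ⁿ`. -/
def Wminus {E : Type*} [LinearOrder E] {H : Type*} [NormedAddCommGroup H]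
    [InnerProductSpace ℂ H] [CompleteSpace H]
    (S : SRegular E) (U : unitary (H →L[ℂ] H)) (A : H →L[ℂ] H) (α : E) : H →L[ℂ] H :=
  ∑' n : ℕ, S.p α n •
    (((U ^ (n : ℤ) : unitary (H →L[ℂ] H)) : H →L[ℂ] H) ∘L A ∘L
      ((U ^ (-(n : ℤ)) : unitary (H →L[ℂ] H)) : H →L[ℂ] H))

/-- The symmetrized conjugate sum `Σ_{l=-n}^{n} Uˡ K U⁻ˡ` of an operator `K`
by a unitary `U`. -/
def conjSum {H : Type*} [NormedAddCommGroup H] [InnerProductSpace ℂ H] [CompleteSpace H]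
    (U : unitary (H →L[ℂ] H)) (K : H →L[ℂ] H) (n : ℕ) : H →L[ℂ] H :=
  ∑ l ∈ Finset.Icc (-(n : ℤ)) (n : ℤ),
    ((U ^ l : unitary (H →L[ℂ] H)) : H →L[ℂ] H) ∘L K ∘L
      ((U ^ (-l) : unitary (H →L[ℂ] H)) : H →L[ℂ] H)

/-!
With `g m = Uᵐ A U¹⁻ᵐ` one has `Uˡ (AU - UA) U⁻ˡ = g l - g (l + 1)`, so the sum over
`-n ≤ l ≤ n` telescopes to `g (-n) - g (n + 1) = U⁻ⁿAUⁿ⁺¹ - Uⁿ⁺¹AU⁻ⁿ`, a difference of two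
unitary conjugates of `A`. Multiplying the series of `W₊(α)` by `U` on the right and that of
`W₋(α)` by `U` on the left produces exactly these two terms, weighted by `p_{α,n}`.
-/

open Finset

theorem Finset.sum_Icc_int_sub' {M : Type*} [AddCommGroup M] (f : ℤ → M) {a b : ℤ}
    (hab : a ≤ b + 1) : ∑ i ∈ Icc a b, (f i - f (i + 1)) = f a - f (b + 1) := by
  obtain ⟨k, rfl⟩ : ∃ k : ℕ, b = a - 1 + k := ⟨(b - (a - 1)).toNat, by omega⟩
  induction k with
  | zero => simp
  | succ k ih =>
    rw [Nat.cast_succ, ← add_assoc, ← insert_Icc_right_eq_Icc_add_one (by omega),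
      sum_insert (by simp), ih (by omega)]
    abel

theorem CStarRing.norm_coe_unitary_mul_mul_coe_unitary {R : Type*} [NormedRing R] [StarRing R]
    [CStarRing R] (U V : unitary R) (A : R) : ‖(U : R) * (A * V)‖ = ‖A‖ := by
  rw [norm_coe_unitary_mul, norm_mul_coe_unitary]

theorem summable_norm_smul_of_norm_le {ι E : Type*} [SeminormedAddCommGroup E] [NormedSpace ℝ E]
    {p : ι → ℝ} (hp : Summable p) {f : ι → E} {C : ℝ} (hf : ∀ i, ‖f i‖ ≤ C) :
    Summable fun i => ‖p i • f i‖ :=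
  (hp.abs.mul_right C).of_nonneg_of_le (fun _ => norm_nonneg _) fun i => by
    rw [norm_smul, Real.norm_eq_abs]
    exact mul_le_mul_of_nonneg_left (hf i) (abs_nonneg _)

section Unitary

variable {R : Type*} [Ring R] [StarRing R] (U : unitary R) (A : R)

theorem unitary_zpow_mul_commutator_mul (l : ℤ) :
    ((U ^ l : unitary R) : R) * ((A * U - U * A) * ((U ^ (-l) : unitary R) : R)) =
      ((U ^ l : unitary R) : R) * (A * ((U ^ (1 - l) : unitary R) : R)) -
        ((U ^ (l + 1) : unitary R) : R) * (A * ((U ^ (-l) : unitary R) : R)) := by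
  rw [sub_eq_add_neg (1 : ℤ), zpow_add, zpow_add, zpow_one]
  simp only [Submonoid.coe_mul, mul_sub, sub_mul, mul_assoc]

theorem sum_Icc_unitary_zpow_mul_commutator_mul (n : ℕ) :
    ∑ l ∈ Icc (-(n : ℤ)) n,
        ((U ^ l : unitary R) : R) * ((A * U - U * A) * ((U ^ (-l) : unitary R) : R)) =
      ((U ^ (-(n : ℤ)) : unitary R) : R) * (A * ((U ^ ((n : ℤ) + 1) : unitary R) : R)) -
        ((U ^ ((n : ℤ) + 1) : unitary R) : R) * (A * ((U ^ (-(n : ℤ)) : unitary R) : R)) := by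
  set g : ℤ → R := fun m => ((U ^ m : unitary R) : R) * (A * ((U ^ (1 - m) : unitary R) : R))
  have hg (l : ℤ) : ((U ^ l : unitary R) : R) * ((A * U - U * A) * ((U ^ (-l) : unitary R) : R)) =
      g l - g (l + 1) := by
    simp only [unitary_zpow_mul_commutator_mul, g, sub_add_cancel_right]
  rw [sum_congr rfl fun l _ => hg l, Finset.sum_Icc_int_sub' g (by omega)]
  simp only [g, sub_neg_eq_add, add_comm (1 : ℤ) n, sub_add_cancel_right]

end Unitary

section WaveOperators

variable {H : Type*} [NormedAddCommGroup H] [InnerProductSpace ℂ H] [CompleteSpace H]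
  (U : unitary (H →L[ℂ] H)) (A : H →L[ℂ] H)

-- `f * g` on `H →L[ℂ] H` is `f ∘L g` by definition.
theorem conjSum_commutator (n : ℕ) :
    conjSum U (A ∘L (U : H →L[ℂ] H) - (U : H →L[ℂ] H) ∘L A) n =
      ((U ^ (-(n : ℤ)) : unitary (H →L[ℂ] H)) : H →L[ℂ] H) ∘L A ∘L
          ((U ^ ((n : ℤ) + 1) : unitary (H →L[ℂ] H)) : H →L[ℂ] H) -
        ((U ^ ((n : ℤ) + 1) : unitary (H →L[ℂ] H)) : H →L[ℂ] H) ∘L A ∘L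
          ((U ^ (-(n : ℤ)) : unitary (H →L[ℂ] H)) : H →L[ℂ] H) :=
  sum_Icc_unitary_zpow_mul_commutator_mul U A n

theorem norm_conjSum_commutator_le (n : ℕ) :
    ‖conjSum U (A ∘L (U : H →L[ℂ] H) - (U : H →L[ℂ] H) ∘L A) n‖ ≤ 2 * ‖A‖ := by
  rw [conjSum_commutator, two_mul]
  exact (norm_sub_le _ _).trans_eq <| congrArg₂ (· + ·)
    (CStarRing.norm_coe_unitary_mul_mul_coe_unitary _ _ A)
    (CStarRing.norm_coe_unitary_mul_mul_coe_unitary _ _ A)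

theorem summable_smul_unitary_zpow_comp_comp {p : ℕ → ℝ} (hp : Summable p) (a b : ℕ → ℤ) :
    Summable fun n => p n •
      (((U ^ a n : unitary (H →L[ℂ] H)) : H →L[ℂ] H) ∘L A ∘L
        ((U ^ b n : unitary (H →L[ℂ] H)) : H →L[ℂ] H)) :=
  (summable_norm_smul_of_norm_le hp fun _ =>
    (CStarRing.norm_coe_unitary_mul_mul_coe_unitary _ _ A).le).of_norm

variable {E : Type*} [LinearOrder E] (S : SRegular E) (α : E)

theorem hasSum_Wplus :
    HasSum (fun n : ℕ => S.p α n •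
      (((U ^ (-(n : ℤ)) : unitary (H →L[ℂ] H)) : H →L[ℂ] H) ∘L A ∘L
        ((U ^ (n : ℤ) : unitary (H →L[ℂ] H)) : H →L[ℂ] H))) (Wplus S U A α) :=
  (summable_smul_unitary_zpow_comp_comp U A (S.hasSum_one α).summable _ _).hasSum

theorem hasSum_Wminus :
    HasSum (fun n : ℕ => S.p α n •
      (((U ^ (n : ℤ) : unitary (H →L[ℂ] H)) : H →L[ℂ] H) ∘L A ∘L
        ((U ^ (-(n : ℤ)) : unitary (H →L[ℂ] H)) : H →L[ℂ] H))) (Wminus S U A α) :=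
  (summable_smul_unitary_zpow_comp_comp U A (S.hasSum_one α).summable _ _).hasSum

theorem hasSum_smul_conjSum_commutator :
    HasSum (fun n : ℕ => S.p α n • conjSum U (A ∘L (U : H →L[ℂ] H) - (U : H →L[ℂ] H) ∘L A) n)
      (Wplus S U A α ∘L (U : H →L[ℂ] H) - (U : H →L[ℂ] H) ∘L Wminus S U A α) := by
  refine (((hasSum_Wplus U A S α).mul_right (U : H →L[ℂ] H)).sub
    ((hasSum_Wminus U A S α).mul_left (U : H →L[ℂ] H))).congr_fun fun n => ?_
  rw [conjSum_commutator, smul_sub, smul_mul_assoc, mul_smul_comm, zpow_add_one]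
  nth_rw 2 [← (Commute.self_zpow U n).eq]
  rfl

end WaveOperators

theorem wave_operator_commutator_identity_general
    {E : Type*} [LinearOrder E] (S : SRegular E)
    {H : Type*} [NormedAddCommGroup H] [InnerProductSpace ℂ H] [CompleteSpace H]
    (U : unitary (H →L[ℂ] H)) (A : H →L[ℂ] H)
    (K : H →L[ℂ] H) (hK : K = A ∘L (U : H →L[ℂ] H) - (U : H →L[ℂ] H) ∘L A)
    (α : E) :
    (∀ n : ℕ, conjSum U K n
        = ((U ^ (-(n : ℤ)) : unitary (H →L[ℂ] H)) : H →L[ℂ] H) ∘L A ∘L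
            ((U ^ ((n : ℤ) + 1) : unitary (H →L[ℂ] H)) : H →L[ℂ] H)
          - ((U ^ ((n : ℤ) + 1) : unitary (H →L[ℂ] H)) : H →L[ℂ] H) ∘L A ∘L
            ((U ^ (-(n : ℤ)) : unitary (H →L[ℂ] H)) : H →L[ℂ] H)) ∧
    (∀ n : ℕ, ‖conjSum U K n‖ ≤ 2 * ‖A‖) ∧
    Summable (fun n : ℕ => ‖S.p α n • conjSum U K n‖) ∧
    Wplus S U A α ∘L (U : H →L[ℂ] H) - (U : H →L[ℂ] H) ∘L Wminus S U A α
      = ∑' n : ℕ, S.p α n • conjSum U K n := by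
  subst hK
  exact ⟨conjSum_commutator U A, norm_conjSum_commutator_le U A,
    summable_norm_smul_of_norm_le (S.hasSum_one α).summable (norm_conjSum_commutator_le U A),
    (hasSum_smul_conjSum_commutator U A S α).tsum_eq.symm⟩

/-- For a unitary `U` and a bounded operator `A` on a complex Hilbert
space, with `K = AU - UA`, and for any s-regular summation method, one has for every
`α`: each inner sum `Σ_{l=-n}^{n} Uˡ K U⁻ˡ` equals `U⁻ⁿAU^{n+1} - U^{n+1}AU⁻ⁿ` and has
norm at most `2‖A‖`, the series `Σₙ p_{α,n} Σ_{l=-n}^{n} Uˡ K U⁻ˡ` converges absolutely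
in operator norm, and `W₊(α)U - UW₋(α)` equals its sum. -/
theorem wave_operator_commutator_identity
    {E : Type*} [LinearOrder E] [Nonempty E] (S : SRegular E)
    {H : Type*} [NormedAddCommGroup H] [InnerProductSpace ℂ H] [CompleteSpace H]
    (U : unitary (H →L[ℂ] H)) (A : H →L[ℂ] H)
    (K : H →L[ℂ] H) (hK : K = A ∘L (U : H →L[ℂ] H) - (U : H →L[ℂ] H) ∘L A)
    (α : E) :
    (∀ n : ℕ, conjSum U K n
        = ((U ^ (-(n : ℤ)) : unitary (H →L[ℂ] H)) : H →L[ℂ] H) ∘L A ∘L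
            ((U ^ ((n : ℤ) + 1) : unitary (H →L[ℂ] H)) : H →L[ℂ] H)
          - ((U ^ ((n : ℤ) + 1) : unitary (H →L[ℂ] H)) : H →L[ℂ] H) ∘L A ∘L
            ((U ^ (-(n : ℤ)) : unitary (H →L[ℂ] H)) : H →L[ℂ] H)) ∧
    (∀ n : ℕ, ‖conjSum U K n‖ ≤ 2 * ‖A‖) ∧
    Summable (fun n : ℕ => ‖S.p α n • conjSum U K n‖) ∧
    Wplus S U A α ∘L (U : H →L[ℂ] H) - (U : H →L[ℂ] H) ∘L Wminus S U A α
      = ∑' n : ℕ, S.p α n • conjSum U K n :=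
  wave_operator_commutator_identity_general S U A K hK α
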